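/- arXiv:2003.13923 — 2 statements merged into one kernel-verified Lean document; each statement's English description precedes it below -/
import Mathlib

section
/- Let 0 < α < 1. Then w_0^{(α)} = α/2 > 0, w_1^{(α)} = (2 - α - α²)/2 > 0, w_2^{(α)} = α(α² + α - 4)/4 < 0, and for every integer k ≥ 2 one has w_k^{(α)} < 0 and w_k^{(α)} < w_{k+1}^{(α)}. -/
/-- Grünwald–Letnikov coefficients: `g γ 0 = 1`, `g γ k = (1 - (γ+1)/k) * g γ (k-1)`. -/
noncomputable def g (γ : ℝ) : ℕ → ℝ
  | 0 => 1
  | k + 1 => (1 - (γ + 1) / ((k : ℝ) + 1)) * g γ k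

/-- WSGD coefficients: `w γ 0 = (γ/2) g γ 0`, `w γ k = (γ/2) g γ k + ((2-γ)/2) g γ (k-1)`. -/
noncomputable def w (γ : ℝ) : ℕ → ℝ
  | 0 => γ / 2 * g γ 0
  | k + 1 => γ / 2 * g γ (k + 1) + (2 - γ) / 2 * g γ k

lemma g_neg (α : ℝ) (hα0 : 0 < α) (hα1 : α < 1) :
    ∀ k : ℕ, 1 ≤ k → g α k < 0 := by
  intro k hk
  induction k with
  | zero => omega
  | succ n ih =>
    match n, ih with
    | 0, _ => simp [g]; linarith
    | m + 1, ih =>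
      have hgm := ih (by omega)
      have e : g α (m + 1 + 1) = (1 - (α + 1) / ((m : ℝ) + 1 + 1)) * g α (m + 1) := by
        simp [g]
      rw [e]
      have hm : (2 : ℝ) ≤ (m : ℝ) + 1 + 1 := by
        have : (0 : ℝ) ≤ (m : ℝ) := Nat.cast_nonneg m
        linarith
      have hfrac : (α + 1) / ((m : ℝ) + 1 + 1) < 1 := by
        rw [div_lt_one (by linarith)]
        linarith
      exact mul_neg_of_pos_of_neg (by linarith) hgm

lemma g_mono (α : ℝ) (hα0 : 0 < α) (hα1 : α < 1) :
    ∀ k : ℕ, 1 ≤ k → g α k < g α (k + 1) := by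
  intro k hk
  have hgk := g_neg α hα0 hα1 k hk
  have e : g α (k + 1) = (1 - (α + 1) / ((k : ℝ) + 1)) * g α k := by simp [g]
  rw [e]
  have hk1 : (0 : ℝ) < (k : ℝ) + 1 := by positivity
  have hfrac : 0 < (α + 1) / ((k : ℝ) + 1) := by positivity
  nlinarith

theorem stmt_6 (α : ℝ) (hα0 : 0 < α) (hα1 : α < 1) :
    w α 0 = α / 2 ∧ 0 < w α 0 ∧
    w α 1 = (2 - α - α ^ 2) / 2 ∧ 0 < w α 1 ∧
    w α 2 = α * (α ^ 2 + α - 4) / 4 ∧ w α 2 < 0 ∧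
    (∀ k : ℕ, 2 ≤ k → w α k < 0 ∧ w α k < w α (k + 1)) := by
  have h0 : w α 0 = α / 2 := by simp [w, g]
  have h1 : w α 1 = (2 - α - α ^ 2) / 2 := by
    show α / 2 * g α 1 + (2 - α) / 2 * g α 0 = _
    simp [g]; ring
  have h2 : w α 2 = α * (α ^ 2 + α - 4) / 4 := by
    show α / 2 * g α 2 + (2 - α) / 2 * g α 1 = _
    simp only [g, Nat.cast_zero, Nat.cast_one]
    ring
  refine ⟨h0, by rw [h0]; linarith, h1, by rw [h1]; nlinarith, h2, by rw [h2]; nlinarith, ?_⟩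
  intro k hk
  obtain ⟨m, rfl⟩ : ∃ m, k = m + 2 := ⟨k - 2, by omega⟩
  have hg1 := g_neg α hα0 hα1 (m + 1) (by omega)
  have hg2 := g_neg α hα0 hα1 (m + 2) (by omega)
  have hmono1 := g_mono α hα0 hα1 (m + 1) (by omega)
  have hmono2 := g_mono α hα0 hα1 (m + 2) (by omega)
  have e1 : w α (m + 2) = α / 2 * g α (m + 2) + (2 - α) / 2 * g α (m + 1) := rfl
  have e2 : w α (m + 3) = α / 2 * g α (m + 3) + (2 - α) / 2 * g α (m + 2) := rfl
  constructor
  · rw [e1]; nlinarith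
  · rw [e1, e2]; nlinarith
end

section
/- Let 0 < α < 1. Then every partial sum of the WSGD coefficients is strictly positive: ∑_{k=0}^{m} w_k^{(α)} > 0 for every integer m ≥ 1. -/
noncomputable def P (α : ℝ) (m : ℕ) : ℝ := ∏ j ∈ Finset.range m, (1 - α / ((j : ℝ) + 1))

lemma P_pos (α : ℝ) (hα1 : α < 1) (hα0 : 0 < α) (m : ℕ) : 0 < P α m := by
  apply Finset.prod_pos
  intro j _
  have hj0 : (0:ℝ) ≤ (j:ℝ) := Nat.cast_nonneg j
  have hj : α < (j : ℝ) + 1 := by linarith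
  have : α / ((j : ℝ) + 1) < 1 := (div_lt_one (by positivity)).mpr hj
  linarith

lemma g_succ (α : ℝ) : ∀ m : ℕ, g α (m + 1) = P α m * (-(α / ((m : ℝ) + 1))) := by
  intro m
  induction m with
  | zero => simp [g, P]
  | succ n ih =>
      have h1 : ((n : ℝ) + 1) ≠ 0 := by positivity
      have h2 : ((n : ℝ) + 1 + 1) ≠ 0 := by positivity
      rw [g, ih]
      simp only [P, Finset.prod_range_succ]
      push_cast
      field_simp
      ring

lemma sum_g (α : ℝ) (m : ℕ) : ∑ k ∈ Finset.range (m + 1), g α k = P α m := by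
  induction m with
  | zero => simp [g, P]
  | succ n ih =>
      rw [Finset.sum_range_succ, ih, g_succ]
      simp only [P, Finset.prod_range_succ]
      ring

lemma sum_w (α : ℝ) (m : ℕ) :
    ∑ k ∈ Finset.range (m + 2), w α k
      = α / 2 * P α (m + 1) + (2 - α) / 2 * P α m := by
  induction m with
  | zero =>
      simp [Finset.sum_range_succ, w, g, P, Finset.prod_range_succ]
      ring
  | succ n ih =>
      rw [show n + 1 + 2 = (n + 2) + 1 from rfl, Finset.sum_range_succ, ih]
      rw [show w α (n + 2) = α / 2 * g α (n + 2) + (2 - α) / 2 * g α (n + 1) from rfl]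
      have e1 : P α (n + 2) = P α (n + 1) + g α (n + 2) := by
        rw [← sum_g, ← sum_g, Finset.sum_range_succ]
      have e2 : P α (n + 1) = P α n + g α (n + 1) := by
        rw [← sum_g, ← sum_g, Finset.sum_range_succ]
      rw [e1, e2]
      ring

theorem stmt_8 (α : ℝ) (hα0 : 0 < α) (hα1 : α < 1) :
    ∀ m : ℕ, 1 ≤ m → 0 < ∑ k ∈ Finset.range (m + 1), w α k := by
  intro m hm
  obtain ⟨n, rfl⟩ := Nat.exists_eq_add_of_le hm
  rw [show 1 + n + 1 = n + 2 from by ring, sum_w]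
  have p1 := P_pos α hα1 hα0 (n + 1)
  have p2 := P_pos α hα1 hα0 n
  have : 0 < α / 2 := by linarith
  have : 0 < (2 - α) / 2 := by linarith
  positivity
end
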